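/- Let S be a nonempty finite set, and V₁, V₂ : S → ℝ with η·r_min ≤ Vᵢ(s) ≤ η·r_max for all s, where 0 < r_min ≤ r_max and η > 0. Then |(Σ V₁(s)²)/(Σ V₁(s)) − (Σ V₂(s)²)/(Σ V₂(s))| ≤ ((2r_max − r_min)/r_min) · max_s |V₁(s) − V₂(s)|. -/
import Mathlib


theorem stmt3 (S : Type*) [Fintype S] [Nonempty S]
    (V₁ V₂ : S → ℝ) (r_min r_max η : ℝ)
    (hrmin : 0 < r_min) (hr : r_min ≤ r_max) (hη : 0 < η)
    (hV₁ : ∀ s, η * r_min ≤ V₁ s ∧ V₁ s ≤ η * r_max)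
    (hV₂ : ∀ s, η * r_min ≤ V₂ s ∧ V₂ s ≤ η * r_max) :
    |(∑ s, (V₁ s) ^ 2) / (∑ s, V₁ s) - (∑ s, (V₂ s) ^ 2) / (∑ s, V₂ s)| ≤
      ((2 * r_max - r_min) / r_min) *
        (Finset.univ.sup' Finset.univ_nonempty (fun s => |V₁ s - V₂ s|)) := by
  set m := η * r_min with hm
  set M := η * r_max with hM
  have hm0 : 0 < m := mul_pos hη hrmin
  have hmM : m ≤ M := by
    have := mul_le_mul_of_nonneg_left hr hη.le
    simpa [hm, hM] using this
  set n := (Fintype.card S : ℝ) with hn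
  have hn0 : 0 < n := by
    rw [hn]
    exact_mod_cast Fintype.card_pos (α := S)
  set ε := Finset.univ.sup' Finset.univ_nonempty (fun s => |V₁ s - V₂ s|) with hε
  have hεs : ∀ s : S, |V₁ s - V₂ s| ≤ ε :=
    fun s => Finset.le_sup' (fun s => |V₁ s - V₂ s|) (Finset.mem_univ s)
  have hε0 : 0 ≤ ε := le_trans (abs_nonneg _) (hεs (Classical.arbitrary S))
  set A₁ := ∑ s, (V₁ s) ^ 2 with hA₁
  set B₁ := ∑ s, V₁ s with hB₁def
  set A₂ := ∑ s, (V₂ s) ^ 2 with hA₂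
  set B₂ := ∑ s, V₂ s with hB₂def
  have hBlow : ∀ (V : S → ℝ), (∀ s, m ≤ V s) → n * m ≤ ∑ s, V s := by
    intro V hV
    calc n * m = ∑ _s : S, m := by simp [Finset.sum_const, hn, mul_comm]
    _ ≤ ∑ s, V s := Finset.sum_le_sum fun s _ => hV s
  have hB₁ : n * m ≤ B₁ := hBlow V₁ (fun s => (hV₁ s).1)
  have hB₂ : n * m ≤ B₂ := hBlow V₂ (fun s => (hV₂ s).1)
  have hB₁0 : 0 < B₁ := lt_of_lt_of_le (mul_pos hn0 hm0) hB₁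
  have hB₂0 : 0 < B₂ := lt_of_lt_of_le (mul_pos hn0 hm0) hB₂
  -- inner bound
  have hinner : ∀ s : S, |B₂ * (V₁ s + V₂ s) - A₂| ≤ (2 * M - m) * B₂ := by
    intro s
    have hrepr : B₂ * (V₁ s + V₂ s) - A₂ = ∑ t, V₂ t * (V₁ s + V₂ s - V₂ t) := by
      have h : ∀ t : S, V₂ t * (V₁ s + V₂ s - V₂ t) = V₂ t * (V₁ s + V₂ s) - V₂ t ^ 2 :=
        fun t => by ring
      rw [Finset.sum_congr rfl fun t _ => h t, Finset.sum_sub_distrib, ← Finset.sum_mul,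
        ← hB₂def, ← hA₂]
    rw [hrepr]
    calc |∑ t, V₂ t * (V₁ s + V₂ s - V₂ t)| ≤ ∑ t, |V₂ t * (V₁ s + V₂ s - V₂ t)| :=
          Finset.abs_sum_le_sum_abs _ _
    _ ≤ ∑ t, V₂ t * (2 * M - m) := by
        refine Finset.sum_le_sum fun t _ => ?_
        rw [abs_mul, abs_of_pos (lt_of_lt_of_le hm0 (hV₂ t).1)]
        refine mul_le_mul_of_nonneg_left ?_ (le_of_lt (lt_of_lt_of_le hm0 (hV₂ t).1))
        rw [abs_le]
        constructor
        · have h1 := (hV₁ s).1; have h2 := (hV₂ s).1; have h3 := (hV₂ t).2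
          linarith
        · have h1 := (hV₁ s).2; have h2 := (hV₂ s).2; have h3 := (hV₂ t).1
          linarith
    _ = (2 * M - m) * B₂ := by rw [← Finset.sum_mul]; ring
  -- numerator identity
  have hid : A₁ * B₂ - A₂ * B₁ = ∑ s, (V₁ s - V₂ s) * (B₂ * (V₁ s + V₂ s) - A₂) := by
    have : ∑ s, (V₁ s - V₂ s) * (B₂ * (V₁ s + V₂ s) - A₂)
        = ∑ s, (B₂ * ((V₁ s) ^ 2 - (V₂ s) ^ 2) - A₂ * (V₁ s - V₂ s)) :=
      Finset.sum_congr rfl fun s _ => by ring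
    rw [this, Finset.sum_sub_distrib, ← Finset.mul_sum, ← Finset.mul_sum,
      Finset.sum_sub_distrib, Finset.sum_sub_distrib, ← hA₁, ← hA₂, ← hB₁def, ← hB₂def]
    ring
  have hnum : |A₁ * B₂ - A₂ * B₁| ≤ n * (ε * ((2 * M - m) * B₂)) := by
    rw [hid]
    calc |∑ s, (V₁ s - V₂ s) * (B₂ * (V₁ s + V₂ s) - A₂)|
        ≤ ∑ s, |(V₁ s - V₂ s) * (B₂ * (V₁ s + V₂ s) - A₂)| := Finset.abs_sum_le_sum_abs _ _
    _ ≤ ∑ _s : S, ε * ((2 * M - m) * B₂) := by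
        refine Finset.sum_le_sum fun s _ => ?_
        rw [abs_mul]
        exact mul_le_mul (hεs s) (hinner s) (abs_nonneg _)  hε0
    _ = n * (ε * ((2 * M - m) * B₂)) := by simp [Finset.sum_const, hn]
  have hdiff : |A₁ / B₁ - A₂ / B₂| = |A₁ * B₂ - A₂ * B₁| / (B₁ * B₂) := by
    rw [div_sub_div _ _ hB₁0.ne' hB₂0.ne', abs_div, abs_of_pos (mul_pos hB₁0 hB₂0),
      mul_comm B₁ A₂]
  rw [hdiff]
  have hMm0 : 0 ≤ 2 * M - m := by linarith
  have hgoal : |A₁ * B₂ - A₂ * B₁| / (B₁ * B₂) ≤ (2 * M - m) / m * ε := by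
    rw [div_le_iff₀ (mul_pos hB₁0 hB₂0)]
    calc |A₁ * B₂ - A₂ * B₁| ≤ n * (ε * ((2 * M - m) * B₂)) := hnum
    _ = ((2 * M - m) / m * ε) * ((n * m) * B₂) := by
        field_simp
    _ ≤ ((2 * M - m) / m * ε) * (B₁ * B₂) := by
        refine mul_le_mul_of_nonneg_left ?_ (by positivity)
        exact mul_le_mul_of_nonneg_right hB₁ hB₂0.le
  have heq : (2 * M - m) / m = (2 * r_max - r_min) / r_min := by
    rw [hM, hm]
    rw [div_eq_div_iff (by positivity) (by positivity)]
    ring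
  calc |A₁ * B₂ - A₂ * B₁| / (B₁ * B₂) ≤ (2 * M - m) / m * ε := hgoal
  _ = (2 * r_max - r_min) / r_min * ε := by rw [heq]
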